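/- The function f(z) = Z₁(z)² + Z₂(z)² + ⋯ + Z₇(z)², where Z_i(z) = x_i − x₀e_i, equals (x₁² + ⋯ + x₇² − 7x₀²) − 2Σ_{i=1}^7 x₀x_i e_i, is left octonion-monogenic, and its only zero in O is z = 0. -/

import Mathlib

noncomputable section

/-- Octonions as the Cayley–Dickson double of the quaternions. -/
abbrev O := Quaternion ℝ × Quaternion ℝ

/-- Cayley–Dickson multiplication. -/
def omul (x y : O) : O := (x.1 * y.1 - y.2 * star x.2, star x.1 * y.2 + y.1 * x.2)

/-- Octonionic conjugation. -/
def oconj (x : O) : O := (star x.1, -x.2)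

/-- The unit 1 = (1,0). -/
def oone : O := (1, 0)

/-- Euclidean norm. -/
def onorm (x : O) : ℝ := Real.sqrt (‖x.1‖^2 + ‖x.2‖^2)

def qi : Quaternion ℝ := ⟨0,1,0,0⟩
def qj : Quaternion ℝ := ⟨0,0,1,0⟩

/-- The standard octonion basis 1, e₁, …, e₇ with e₁ = (i,0), e₂ = (j,0), e₃ = (0,1),
    e₄ = e₁e₂, e₅ = e₁e₃, e₆ = e₂e₃, e₇ = (e₁e₂)e₃. -/
def basis8 : Fin 8 → O := ![oone, (qi,0), (qj,0), ((0:Quaternion ℝ),1),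
  omul (qi,0) (qj,0), omul (qi,0) (0,1), omul (qj,0) (0,1), omul (omul (qi,0) (qj,0)) (0,1)]

/-- The real coordinates x₀,…,x₇ of z = x₀ + Σ xᵢeᵢ with respect to `basis8`. -/
def coord : Fin 8 → O → ℝ :=
  ![fun z => z.1.re, fun z => z.1.imI, fun z => z.1.imJ, fun z => z.2.re,
    fun z => z.1.imK, fun z => -z.2.imI, fun z => -z.2.imJ, fun z => -z.2.imK]

/-- Left octonionic Cauchy–Riemann operator D f = ∂f/∂x₀ + Σᵢ eᵢ·(∂f/∂xᵢ). -/
def Dleft (f : O → O) (z : O) : O :=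
  fderiv ℝ f z (basis8 0) + ∑ i : Fin 7, omul (basis8 i.succ) (fderiv ℝ f z (basis8 i.succ))

/-- Right octonionic Cauchy–Riemann operator f D = ∂f/∂x₀ + Σᵢ (∂f/∂xᵢ)·eᵢ. -/
def Dright (f : O → O) (z : O) : O :=
  fderiv ℝ f z (basis8 0) + ∑ i : Fin 7, omul (fderiv ℝ f z (basis8 i.succ)) (basis8 i.succ)

/-- Fueter polynomials Zᵢ(z) = xᵢ − x₀eᵢ. -/
def Zp (i : Fin 8) (z : O) : O := coord i z • oone - coord 0 z • basis8 i

/-! Each `Zᵢ = xᵢ − x₀eᵢ` lies in the commutative subalgebra `ℝ ⊕ ℝeᵢ ≅ ℂ`, where `eᵢ² = −1`, so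
`Zᵢ² = xᵢ² − x₀² − 2x₀xᵢeᵢ`; summing gives the explicit formula. Since every `Zᵢ` is real-linear,
the derivative of `f = Σ Zᵢ²` in the direction `v` is `Σ (Zᵢ(z)Zᵢ(v) + Zᵢ(v)Zᵢ(z))`. With
`Zᵢ(1) = −eᵢ` and `Zᵢ(eⱼ) = δᵢⱼ` this gives `Df = Σ (eᵢZᵢ − Zᵢeᵢ)`, which vanishes because `eᵢ`
commutes with `Zᵢ`. Finally `f(z) = 0` means `x₀xᵢ = 0` for all `i` and `Σ xᵢ² = 7x₀²`, which forces
`x₀ = 0` and then every `xᵢ = 0`. -/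

lemma omul_add_left (x y w : O) : omul (x + y) w = omul x w + omul y w := by
  simp only [omul, Prod.fst_add, Prod.snd_add, star_add, mul_add, add_mul, Prod.mk_add_mk]
  congr 1 <;> abel

lemma omul_add_right (w x y : O) : omul w (x + y) = omul w x + omul w y := by
  simp only [omul, Prod.fst_add, Prod.snd_add, mul_add, add_mul, Prod.mk_add_mk]
  congr 1 <;> abel

lemma omul_smul_left (c : ℝ) (x w : O) : omul (c • x) w = c • omul x w := by
  simp [omul, smul_sub, smul_add]

lemma omul_smul_right (c : ℝ) (w x : O) : omul w (c • x) = c • omul w x := by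
  simp [omul, smul_sub, smul_add]

def omulₗ : O →ₗ[ℝ] O →ₗ[ℝ] O :=
  LinearMap.mk₂ ℝ omul omul_add_left omul_smul_left omul_add_right omul_smul_right

lemma omul_sub_left (x y w : O) : omul (x - y) w = omul x w - omul y w :=
  LinearMap.map_sub₂ omulₗ x y w

lemma omul_sub_right (w x y : O) : omul w (x - y) = omul w x - omul w y :=
  (omulₗ w).map_sub x y

lemma omul_neg_left (x w : O) : omul (-x) w = -omul x w :=
  LinearMap.map_neg₂ omulₗ x w

lemma omul_neg_right (w x : O) : omul w (-x) = -omul w x :=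
  (omulₗ w).map_neg x

lemma omul_zero_left (x : O) : omul 0 x = 0 :=
  LinearMap.map_zero₂ omulₗ x

lemma omul_zero_right (w : O) : omul w 0 = 0 :=
  (omulₗ w).map_zero

lemma omul_oone_left (x : O) : omul oone x = x := by
  simp [omul, oone]

lemma omul_oone_right (x : O) : omul x oone = x := by
  simp [omul, oone]

def coordₗ (i : Fin 8) : O →ₗ[ℝ] ℝ where
  toFun := coord i
  map_add' x y := by fin_cases i <;> simp [coord] <;> ring
  map_smul' c x := by fin_cases i <;> simp [coord]

lemma coordₗ_apply (i : Fin 8) (z : O) : coordₗ i z = coord i z := rfl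

lemma basis8_zero : basis8 0 = oone := rfl

open Quaternion in
lemma coord_basis8 (i j : Fin 8) : coord i (basis8 j) = if i = j then 1 else 0 := by
  fin_cases i <;> fin_cases j <;>
    simp [coord, basis8, omul, oone, Quaternion.re_mul, Quaternion.imI_mul, Quaternion.imJ_mul,
      Quaternion.imK_mul] <;> try simp [qi, qj]

lemma eq_zero_of_coord_eq_zero {z : O} (h : ∀ i, coord i z = 0) : z = 0 :=
  Prod.ext (Quaternion.ext _ _ (h 0) (h 1) (h 2) (h 4))
    (Quaternion.ext _ _ (h 3) (neg_eq_zero.1 (h 5)) (neg_eq_zero.1 (h 6)) (neg_eq_zero.1 (h 7)))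

open Quaternion in
lemma basis8_succ_mul_self (i : Fin 7) : omul (basis8 i.succ) (basis8 i.succ) = -oone := by
  fin_cases i <;> ext <;>
    simp [basis8, omul, oone, Quaternion.re_mul, Quaternion.imI_mul, Quaternion.imJ_mul,
      Quaternion.imK_mul] <;> try simp [qi, qj]

lemma omul_self_oone_sub_smul {e : O} (he : omul e e = -oone) (a b : ℝ) :
    omul (a • oone - b • e) (a • oone - b • e) = (a ^ 2 - b ^ 2) • oone - (2 * a * b) • e := by
  simp only [omul_sub_left, omul_sub_right, omul_smul_left, omul_smul_right, omul_oone_left,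
    omul_oone_right, he, smul_neg]
  module

lemma omul_comm_oone_sub_smul (e : O) (a b : ℝ) :
    omul e (a • oone - b • e) = omul (a • oone - b • e) e := by
  simp only [omul_sub_left, omul_sub_right, omul_smul_left, omul_smul_right, omul_oone_left,
    omul_oone_right]

def Zpₗ (i : Fin 8) : O →ₗ[ℝ] O := (coordₗ i).smulRight oone - (coordₗ 0).smulRight (basis8 i)

lemma Zpₗ_apply (i : Fin 8) (z : O) : Zpₗ i z = Zp i z := rfl

lemma Zp_succ_basis8_zero (i : Fin 7) : Zp i.succ (basis8 0) = -basis8 i.succ := by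
  simp [Zp, coord_basis8, Fin.succ_ne_zero]

lemma Zp_succ_basis8_succ (i j : Fin 7) :
    Zp i.succ (basis8 j.succ) = if i = j then oone else 0 := by
  split_ifs with h <;> simp [Zp, coord_basis8, h, (Fin.succ_ne_zero j).symm]

lemma basis8_succ_omul_Zp_succ (i : Fin 7) (z : O) :
    omul (basis8 i.succ) (Zp i.succ z) = omul (Zp i.succ z) (basis8 i.succ) :=
  omul_comm_oone_sub_smul _ _ _

theorem fderiv_sum_bilinear_self_apply {𝕜 E F G ι : Type*} [NontriviallyNormedField 𝕜]
    [NormedAddCommGroup E] [NormedSpace 𝕜 E] [NormedAddCommGroup F] [NormedSpace 𝕜 F]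
    [NormedAddCommGroup G] [NormedSpace 𝕜 G]
    (B : E →L[𝕜] E →L[𝕜] F) (L : ι → G →L[𝕜] E) (s : Finset ι) (z v : G) :
    fderiv 𝕜 (fun w => ∑ i ∈ s, B (L i w) (L i w)) z v
      = ∑ i ∈ s, (B (L i z) (L i v) + B (L i v) (L i z)) := by
  have := HasFDerivAt.fun_sum (u := s) fun i _ =>
    B.hasFDerivAt_of_bilinear (L i).hasFDerivAt (L i).hasFDerivAt (x := z)
  simp [this.fderiv]

lemma fderiv_sum_Zp_mul_self_apply (z v : O) :
    fderiv ℝ (fun w => ∑ i : Fin 7, omul (Zp i.succ w) (Zp i.succ w)) z v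
      = ∑ i : Fin 7, (omul (Zp i.succ z) (Zp i.succ v) + omul (Zp i.succ v) (Zp i.succ z)) := by
  simpa only [LinearMap.toContinuousBilinearMap_apply, LinearMap.coe_toContinuousLinearMap',
    Zpₗ_apply, omulₗ, LinearMap.mk₂_apply] using
    fderiv_sum_bilinear_self_apply omulₗ.toContinuousBilinearMap
      (fun i : Fin 7 => (Zpₗ i.succ).toContinuousLinearMap) Finset.univ z v

lemma eq_zero_of_sum_sq_eq_mul_sq {ι : Type*} {s : Finset ι} {x : ι → ℝ} {x₀ c : ℝ} (hc : c ≠ 0)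
    (hsum : ∑ i ∈ s, x i ^ 2 = c * x₀ ^ 2) (hmul : ∀ i ∈ s, x₀ * x i = 0) :
    x₀ = 0 ∧ ∀ i ∈ s, x i = 0 := by
  have hx₀ : x₀ = 0 := by
    by_contra h
    have hx : ∀ i ∈ s, x i ^ 2 = 0 := fun i hi => by
      simp [(mul_eq_zero.1 (hmul i hi)).resolve_left h]
    rw [Finset.sum_eq_zero hx] at hsum
    simp_all
  refine ⟨hx₀, fun i hi => ?_⟩
  rw [hx₀, sq, mul_zero, mul_zero,
    Finset.sum_eq_zero_iff_of_nonneg fun i _ => sq_nonneg (x i)] at hsum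
  exact pow_eq_zero_iff two_ne_zero |>.1 (hsum i hi)

theorem sum_Zp_mul_self (z : O) : (∑ i : Fin 7, omul (Zp i.succ z) (Zp i.succ z))
    = ((∑ i : Fin 7, coord i.succ z ^ 2) - 7 * coord 0 z ^ 2) • oone
      - ∑ i : Fin 7, (2 * coord 0 z * coord i.succ z) • basis8 i.succ := by
  simp only [Zp, omul_self_oone_sub_smul (basis8_succ_mul_self _), Finset.sum_sub_distrib,
    ← Finset.sum_smul]
  simp [mul_right_comm _ (coord 0 z)]

theorem Dleft_sum_Zp_mul_self (z : O) :
    Dleft (fun w => ∑ i : Fin 7, omul (Zp i.succ w) (Zp i.succ w)) z = 0 := by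
  have h0 : fderiv ℝ (fun w => ∑ i : Fin 7, omul (Zp i.succ w) (Zp i.succ w)) z (basis8 0)
      = -∑ i : Fin 7, (omul (Zp i.succ z) (basis8 i.succ) + omul (basis8 i.succ) (Zp i.succ z)) := by
    simp only [fderiv_sum_Zp_mul_self_apply, Zp_succ_basis8_zero, omul_neg_left, omul_neg_right,
      ← neg_add, Finset.sum_neg_distrib]
  have hsucc (j : Fin 7) :
      fderiv ℝ (fun w => ∑ i : Fin 7, omul (Zp i.succ w) (Zp i.succ w)) z (basis8 j.succ)
        = Zp j.succ z + Zp j.succ z := by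
    rw [fderiv_sum_Zp_mul_self_apply, Finset.sum_eq_single j]
    · simp only [Zp_succ_basis8_succ, if_pos, omul_oone_left, omul_oone_right]
    · intro i _ hij
      simp only [Zp_succ_basis8_succ, if_neg hij, omul_zero_left, omul_zero_right, add_zero]
    · exact fun hj => absurd (Finset.mem_univ j) hj
  rw [Dleft, h0]
  simp only [hsucc, omul_add_right, basis8_succ_omul_Zp_succ, neg_add_cancel]

theorem sum_Zp_mul_self_eq_zero_iff (z : O) :
    (∑ i : Fin 7, omul (Zp i.succ z) (Zp i.succ z)) = 0 ↔ z = 0 := by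
  refine ⟨fun h => ?_, fun h => by simp [h, ← Zpₗ_apply, omul_zero_left]⟩
  rw [sum_Zp_mul_self] at h
  have hre := congrArg (coordₗ 0) h
  have him (j : Fin 7) := congrArg (coordₗ j.succ) h
  simp only [map_sub, map_sum, map_smul, map_zero, coordₗ_apply, ← basis8_zero, coord_basis8]
    at hre him
  simp [(Fin.succ_ne_zero _).symm] at hre him
  obtain ⟨h0, hs⟩ := eq_zero_of_sum_sq_eq_mul_sq (s := Finset.univ)
    (x := fun i : Fin 7 => coord i.succ z) (x₀ := coord 0 z) (c := 7) (by norm_num) (by linarith)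
    fun i _ => mul_eq_zero.2 (him i)
  exact eq_zero_of_coord_eq_zero (Fin.cases h0 fun i => hs i (Finset.mem_univ i))

/-- f = Z₁² + ⋯ + Z₇² in explicit coordinates; it is left monogenic and its only zero is 0. -/
theorem sum_squares_fueter :
    (∀ z : O, (∑ i : Fin 7, omul (Zp i.succ z) (Zp i.succ z))
        = ((∑ i : Fin 7, coord i.succ z ^ 2) - 7 * coord 0 z ^ 2) • oone
          - ∑ i : Fin 7, (2 * coord 0 z * coord i.succ z) • basis8 i.succ) ∧
    (∀ z : O, Dleft (fun w => ∑ i : Fin 7, omul (Zp i.succ w) (Zp i.succ w)) z = 0) ∧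
    (∀ z : O, (∑ i : Fin 7, omul (Zp i.succ z) (Zp i.succ z)) = 0 ↔ z = 0) :=
  ⟨sum_Zp_mul_self, Dleft_sum_Zp_mul_self, sum_Zp_mul_self_eq_zero_iff⟩
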